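/- Let G = (V, E) be a finite simple graph with n vertices and m edges, with a fixed orientation assigning to each edge e = uv an ordered pair of its endpoints, and let k be a positive integer. Let G′ = (V′, E′) be the graph constructed from G as follows: replace each vertex u ∈ V by a path u₁u₂u₃ on three new vertices; for each edge e = uv ∈ E introduce four new vertices e_u, e_v, e_w, e_z and the edges e_u e_v, e_v e_w, e_w e_u, e_w e_z; and add the edges u₃ e_u and v₃ e_v. If G has a vertex cover of size at most n − k, then G′ has a vertex cover of size at most 2n + 2m − k. -/

import Mathlib

/-- The generating relation of the graph `G′` built from `G` (with an orientation given by
`fst`/`snd`): each vertex `u` is replaced by a path `u₁u₂u₃` (the vertices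
`Sum.inl (u, 0)`, `Sum.inl (u, 1)`, `Sum.inl (u, 2)`); each edge `e = uv` gets a gadget on
`e_u = Sum.inr (e, 0)`, `e_v = Sum.inr (e, 1)`, `e_w = Sum.inr (e, 2)`,
`e_z = Sum.inr (e, 3)` with edges `e_u e_v, e_v e_w, e_w e_u, e_w e_z`; and the edges
`u₃ e_u` and `v₃ e_v` are added, where `u = fst e` and `v = snd e`. -/
def vcu2Rel {V : Type*} (G : SimpleGraph V) (fst snd : Sym2 V → V) :
    ((V × Fin 3) ⊕ (↥G.edgeSet × Fin 4)) → ((V × Fin 3) ⊕ (↥G.edgeSet × Fin 4)) → Prop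
  | Sum.inl (u, i), Sum.inl (w, j) => u = w ∧ ((i = 0 ∧ j = 1) ∨ (i = 1 ∧ j = 2))
  | Sum.inr (e, i), Sum.inr (f, j) =>
      e = f ∧ ((i = 0 ∧ j = 1) ∨ (i = 1 ∧ j = 2) ∨ (i = 2 ∧ j = 0) ∨ (i = 2 ∧ j = 3))
  | Sum.inl (u, i), Sum.inr (e, j) =>
      i = 2 ∧ ((j = 0 ∧ fst e.val = u) ∨ (j = 1 ∧ snd e.val = u))
  | _, _ => False

/-- The graph `G′` constructed from `G` and the orientation `fst`/`snd`. -/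
def vcu2Graph {V : Type*} (G : SimpleGraph V) (fst snd : Sym2 V → V) :
    SimpleGraph ((V × Fin 3) ⊕ (↥G.edgeSet × Fin 4)) :=
  SimpleGraph.fromRel (vcu2Rel G fst snd)

/-!
Take the middle vertex `u₂` of every path, the end `u₃` for every `u ∈ C`, the apex `e_w` of
every triangle, and one more triangle vertex per edge `e = uv`: `e_v` if `u ∈ C`, and `e_u`
otherwise (then `v ∈ C`). This covers `G′` with `n + |C| + 2m ≤ 2n + 2m − k` vertices.
-/

open Set SimpleGraph

theorem SimpleGraph.isVertexCover_fromRel {α : Type*} {r : α → α → Prop} {S : Set α}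
    (h : ∀ a b, r a b → a ∈ S ∨ b ∈ S) : (fromRel r).IsVertexCover S := by
  rintro x y ⟨-, hxy | hyx⟩
  exacts [h x y hxy, (h y x hyx).symm]

section Cover

variable {V : Type*} (G : SimpleGraph V) (fst snd : Sym2 V → V) (C : Set V)

open scoped Classical in
noncomputable def vcu2Pick (e : ↥G.edgeSet) : Fin 4 := if fst e.val ∈ C then 1 else 0

noncomputable def vcu2Cover : Set ((V × Fin 3) ⊕ (↥G.edgeSet × Fin 4)) :=
  range (fun u => Sum.inl (u, 1)) ∪ (fun u => Sum.inl (u, 2)) '' C ∪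
    range (fun e => Sum.inr (e, 2)) ∪ range (fun e => Sum.inr (e, vcu2Pick G fst C e))

variable {G fst snd C}

theorem inl_one_mem_vcu2Cover (u : V) : Sum.inl (u, 1) ∈ vcu2Cover G fst C := by
  simp [vcu2Cover]

theorem inl_two_mem_vcu2Cover {u : V} (hu : u ∈ C) : Sum.inl (u, 2) ∈ vcu2Cover G fst C := by
  simp [vcu2Cover, hu]

theorem inr_two_mem_vcu2Cover (e : ↥G.edgeSet) : Sum.inr (e, 2) ∈ vcu2Cover G fst C := by
  simp [vcu2Cover]

theorem inr_zero_mem_vcu2Cover {e : ↥G.edgeSet} (he : fst e.val ∉ C) :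
    Sum.inr (e, 0) ∈ vcu2Cover G fst C := by
  simp [vcu2Cover, vcu2Pick, he]

theorem inr_one_mem_vcu2Cover {e : ↥G.edgeSet} (he : fst e.val ∈ C) :
    Sum.inr (e, 1) ∈ vcu2Cover G fst C := by
  simp [vcu2Cover, vcu2Pick, he]

theorem vcu2Cover_isVertexCover (horient : ∀ e ∈ G.edgeSet, e = s(fst e, snd e))
    (hC : G.IsVertexCover C) : (vcu2Graph G fst snd).IsVertexCover (vcu2Cover G fst C) := by
  have hends (e : ↥G.edgeSet) : fst e.val ∈ C ∨ snd e.val ∈ C := by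
    apply hC
    rw [← mem_edgeSet, ← horient e.val e.2]
    exact e.2
  refine isVertexCover_fromRel ?_
  rintro (⟨u, i⟩ | ⟨e, i⟩) (⟨w, j⟩ | ⟨f, j⟩) hrel <;> simp only [vcu2Rel] at hrel
  · obtain ⟨rfl, ⟨rfl, rfl⟩ | ⟨rfl, rfl⟩⟩ := hrel
    exacts [.inr (inl_one_mem_vcu2Cover u), .inl (inl_one_mem_vcu2Cover u)]
  · obtain ⟨rfl, ⟨rfl, hfst⟩ | ⟨rfl, hsnd⟩⟩ := hrel
    · by_cases hu : u ∈ C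
      · exact .inl (inl_two_mem_vcu2Cover hu)
      · exact .inr (inr_zero_mem_vcu2Cover (hfst ▸ hu))
    · by_cases hf : fst f.val ∈ C
      · exact .inr (inr_one_mem_vcu2Cover hf)
      · exact .inl (inl_two_mem_vcu2Cover (hsnd ▸ (hends f).resolve_left hf))
  · obtain ⟨rfl, ⟨rfl, rfl⟩ | ⟨rfl, rfl⟩ | ⟨rfl, rfl⟩ | ⟨rfl, rfl⟩⟩ := hrel
    · by_cases he : fst e.val ∈ C
      · exact .inr (inr_one_mem_vcu2Cover he)
      · exact .inl (inr_zero_mem_vcu2Cover he)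
    · exact .inr (inr_two_mem_vcu2Cover e)
    · exact .inl (inr_two_mem_vcu2Cover e)
    · exact .inl (inr_two_mem_vcu2Cover e)

theorem vcu2Cover_ncard_le [Fintype V] :
    (vcu2Cover G fst C).ncard ≤ Fintype.card V + C.ncard + 2 * G.edgeSet.ncard := by
  have hinl (i : Fin 3) : Function.Injective
      fun u : V => (Sum.inl (u, i) : (V × Fin 3) ⊕ (↥G.edgeSet × Fin 4)) :=
    fun _ _ h => by simpa using h
  have hinr (p : ↥G.edgeSet → Fin 4) : Function.Injective
      fun e => (Sum.inr (e, p e) : (V × Fin 3) ⊕ (↥G.edgeSet × Fin 4)) :=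
    fun _ _ h => (Prod.ext_iff.1 (Sum.inr_injective h)).1
  unfold vcu2Cover
  grw [ncard_union_le, ncard_union_le, ncard_union_le, ncard_range_of_injective (hinl 1),
    ncard_image_of_injective C (hinl 2), ncard_range_of_injective (hinr fun _ => 2),
    ncard_range_of_injective (hinr _), Nat.card_eq_fintype_card, Nat.card_coe_set_eq]
  omega

end Cover

theorem stmt_17_general {V : Type*} [Fintype V] (G : SimpleGraph V) (fst snd : Sym2 V → V)
    (horient : ∀ e ∈ G.edgeSet, e = s(fst e, snd e)) (k : ℕ)
    (hcover : ∃ C : Set V, (∀ ⦃u v : V⦄, G.Adj u v → u ∈ C ∨ v ∈ C) ∧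
      (C.ncard : ℤ) ≤ (Fintype.card V : ℤ) - k) :
    ∃ C' : Set ((V × Fin 3) ⊕ (↥G.edgeSet × Fin 4)),
      (∀ ⦃x y⦄, (vcu2Graph G fst snd).Adj x y → x ∈ C' ∨ y ∈ C') ∧
      (C'.ncard : ℤ) ≤ 2 * (Fintype.card V : ℤ) + 2 * (G.edgeSet.ncard : ℤ) - k := by
  obtain ⟨C, hC, hCcard⟩ := hcover
  refine ⟨vcu2Cover G fst C, vcu2Cover_isVertexCover horient hC, ?_⟩
  have hcard := vcu2Cover_ncard_le (G := G) (fst := fst) (C := C)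
  omega

/-- If `G` (finite, `n` vertices, `m` edges, with a fixed orientation
`fst`/`snd` of its edges) has a vertex cover of size at most `n − k`, then `G′` has a
vertex cover of size at most `2n + 2m − k`. -/
theorem stmt_17 {V : Type*} [Fintype V] (G : SimpleGraph V) (fst snd : Sym2 V → V)
    (horient : ∀ e ∈ G.edgeSet, e = s(fst e, snd e)) (k : ℕ) (hk : 0 < k)
    (hcover : ∃ C : Set V, (∀ ⦃u v : V⦄, G.Adj u v → u ∈ C ∨ v ∈ C) ∧
      (C.ncard : ℤ) ≤ (Fintype.card V : ℤ) - k) :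
    ∃ C' : Set ((V × Fin 3) ⊕ (↥G.edgeSet × Fin 4)),
      (∀ ⦃x y⦄, (vcu2Graph G fst snd).Adj x y → x ∈ C' ∨ y ∈ C') ∧
      (C'.ncard : ℤ) ≤ 2 * (Fintype.card V : ℤ) + 2 * (G.edgeSet.ncard : ℤ) - k :=
  stmt_17_general G fst snd horient k hcover
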